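/- arXiv:0902.1560 — 3 statements merged into one kernel-verified Lean document; each statement's English description precedes it below -/
import Mathlib

section
/- Let H ∈ ℝ, κ ≥ 0, r > 0 and suppose S := H + (κ/2) r < 0 (equivalently, H r + (κ/2) r² < 0, i.e. r < −2H/κ when κ > 0). Then ∫₀^r exp(H t + (κ/2) t²) dt ≤ min(r, −4/H). -/
lemma stmt_8_aux_int (c r : ℝ) (hc : c ≠ 0) :
    ∫ t in (0:ℝ)..r, Real.exp (c * t) = (Real.exp (c * r) - 1) / c := by
  rw [intervalIntegral.integral_comp_mul_left (fun x => Real.exp x) hc]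
  simp [integral_exp, div_eq_inv_mul]

theorem stmt_8 (H κ r : ℝ) (hκ : 0 ≤ κ) (hr : 0 < r)
    (hS : H + κ / 2 * r < 0) :
    ∫ t in (0 : ℝ)..r, Real.exp (H * t + κ / 2 * t ^ 2) ≤
      min r (-4 / H) := by
  have hH : H < 0 := by nlinarith
  have hH0 : H ≠ 0 := hH.ne
  have hcont : Continuous fun t => Real.exp (H * t + κ / 2 * t ^ 2) := by continuity
  refine le_min ?_ ?_
  · -- bound by r
    calc ∫ t in (0:ℝ)..r, Real.exp (H * t + κ / 2 * t ^ 2)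
        ≤ ∫ _t in (0:ℝ)..r, (1:ℝ) := by
          apply intervalIntegral.integral_mono_on hr.le
            (hcont.intervalIntegrable _ _) intervalIntegrable_const
          intro t ht
          rw [Real.exp_le_one_iff]
          have h1 := mul_le_mul_of_nonneg_left hS.le ht.1
          have h2 := mul_nonneg (mul_nonneg hκ ht.1) (sub_nonneg.mpr ht.2)
          nlinarith [h1, h2]
      _ = r := by simp
  · -- bound by -4/H
    rcases eq_or_lt_of_le hκ with hk0 | hk0
    · -- κ = 0 : integrand is exp (H t)
      have h1 : (∫ t in (0:ℝ)..r, Real.exp (H * t + κ / 2 * t ^ 2))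
          = (Real.exp (H * r) - 1) / H := by
        rw [← stmt_8_aux_int H r hH.ne]
        congr 1; ext t; rw [← hk0]; ring_nf
      rw [h1, div_le_div_right_of_neg hH]
      linarith [Real.exp_pos (H * r)]
    · -- κ > 0
      have hκr : κ * r < -2 * H := by nlinarith
      -- pointwise bound
      have hpt : ∀ t ∈ Set.Icc (0:ℝ) r,
          Real.exp (H * t + κ / 2 * t ^ 2)
            ≤ Real.exp (H / 2 * t) + Real.exp (-(H / 2) * t - H ^ 2 / κ) := by
        intro t ht
        rcases le_total t (-H / κ) with h | h
        · have hκt : κ * t ≤ -H := by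
            rw [le_div_iff₀ hk0] at h
            linarith [h, mul_comm t κ]
          have : H * t + κ / 2 * t ^ 2 ≤ H / 2 * t := by nlinarith [ht.1]
          calc Real.exp (H * t + κ / 2 * t ^ 2) ≤ Real.exp (H / 2 * t) :=
                Real.exp_le_exp.mpr this
            _ ≤ _ := le_add_of_nonneg_right (Real.exp_pos _).le
        · have hκt : -H ≤ κ * t := by
            rw [div_le_iff₀ hk0] at h
            linarith [h, mul_comm t κ]
          have hκt2 : κ * t ≤ -2 * H := by
            nlinarith [mul_nonneg hκ (sub_nonneg.mpr ht.2)]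
          have key : H * t + κ / 2 * t ^ 2 ≤ -(H / 2) * t - H ^ 2 / κ := by
            rw [← sub_nonneg]
            have heq : -(H / 2) * t - H ^ 2 / κ - (H * t + κ / 2 * t ^ 2)
                = (κ * t + H) * (-2 * H - κ * t) / (2 * κ) := by
              field_simp; ring
            rw [heq]
            apply div_nonneg
            · apply mul_nonneg <;> linarith
            · linarith
          calc Real.exp (H * t + κ / 2 * t ^ 2)
              ≤ Real.exp (-(H / 2) * t - H ^ 2 / κ) := Real.exp_le_exp.mpr key
            _ ≤ _ := le_add_of_nonneg_left (Real.exp_pos _).le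
      have c1 : Continuous fun t : ℝ => Real.exp (H / 2 * t) :=
        Real.continuous_exp.comp (continuous_const.mul continuous_id)
      have c2 : Continuous fun t : ℝ => Real.exp (-(H / 2) * t - H ^ 2 / κ) :=
        Real.continuous_exp.comp ((continuous_const.mul continuous_id).sub continuous_const)
      have hmono : (∫ t in (0:ℝ)..r, Real.exp (H * t + κ / 2 * t ^ 2))
          ≤ ∫ t in (0:ℝ)..r,
              (Real.exp (H / 2 * t) + Real.exp (-(H / 2) * t - H ^ 2 / κ)) := by
        apply intervalIntegral.integral_mono_on hr.le
          (hcont.intervalIntegrable _ _) ((c1.add c2).intervalIntegrable _ _) hpt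
      have hH2 : H / 2 ≠ 0 := by simp [hH.ne]
      have hsplit : (∫ t in (0:ℝ)..r,
            (Real.exp (H / 2 * t) + Real.exp (-(H / 2) * t - H ^ 2 / κ)))
          = (Real.exp (H / 2 * r) - 1) / (H / 2)
            + Real.exp (-(H ^ 2 / κ)) * ((Real.exp (-(H / 2) * r) - 1) / (-(H / 2))) := by
        rw [intervalIntegral.integral_add (c1.intervalIntegrable _ _)
          (c2.intervalIntegrable _ _)]
        congr 1
        · exact stmt_8_aux_int (H / 2) r hH2
        · have heq2 : (fun t : ℝ => Real.exp (-(H / 2) * t - H ^ 2 / κ))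
              = fun t : ℝ => Real.exp (-(H ^ 2 / κ)) * Real.exp (-(H / 2) * t) := by
            ext t; rw [← Real.exp_add]; ring_nf
          rw [heq2, intervalIntegral.integral_const_mul,
            stmt_8_aux_int (-(H / 2)) r (neg_ne_zero.mpr hH2)]
      -- now bound each term by -2/H
      have hT1 : (Real.exp (H / 2 * r) - 1) / (H / 2) ≤ -2 / H := by
        rw [show (-2:ℝ) / H = (-1) / (H / 2) by rw [div_div_eq_mul_div]; ring_nf,
          div_le_div_right_of_neg (by linarith : H / 2 < 0)]
        linarith [Real.exp_pos (H / 2 * r)]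
      have hT2 : Real.exp (-(H ^ 2 / κ)) * ((Real.exp (-(H / 2) * r) - 1) / (-(H / 2)))
          ≤ -2 / H := by
        have hle1 : Real.exp (-(H ^ 2 / κ)) * (Real.exp (-(H / 2) * r) - 1) ≤ 1 := by
          have hrle : -(H / 2) * r ≤ H ^ 2 / κ := by
            rw [le_div_iff₀ hk0]
            nlinarith [mul_lt_mul_of_pos_left hκr (show (0:ℝ) < -(H / 2) by linarith)]
          have h3 : Real.exp (-(H ^ 2 / κ)) * Real.exp (-(H / 2) * r) ≤ 1 := by
            rw [← Real.exp_add]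
            apply Real.exp_le_one_iff.mpr
            linarith
          nlinarith [Real.exp_pos (-(H ^ 2 / κ))]
        rw [mul_div_assoc',
          show (-2:ℝ) / H = 1 / (-(H / 2)) by rw [div_neg, neg_div, one_div_div],
          div_le_div_iff_of_pos_right (by linarith : (0:ℝ) < -(H / 2))]
        exact hle1
      calc (∫ t in (0:ℝ)..r, Real.exp (H * t + κ / 2 * t ^ 2))
          ≤ _ := hmono
        _ = _ := hsplit
        _ ≤ -2 / H + -2 / H := add_le_add hT1 hT2
        _ = -4 / H := by ring
end

section
/- Let γ : [log 2, ∞) → (0,∞) be continuous, and define α by α⁻¹(x) := ∫_{log 2}^x dy / γ(y) for x ≥ log 2 (so α is the inverse of this strictly increasing function). Let (Ω, d, μ) be a metric probability space whose isoperimetric profile satisfies Ĩ(v) ≥ v γ(log 1/v) for all v ∈ (0, 1/2], where Ĩ(v) := min(I(v), I(1−v)). Then the log-concentration profile satisfies K(r) ≥ α(r) for all r ≥ 0, i.e. for every Borel set A with μ(A) ≥ 1/2 and every r > 0, 1 − μ(A_r) ≤ exp(−α(r)), where A_r is the open r-neighborhood of A. -/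
open MeasureTheory Filter Set

/-- Minkowski (exterior) boundary measure of `A`:
`liminf_{ε→0+} (μ(A_ε) - μ(A))/ε`, with `A_ε` the open `ε`-neighborhood. -/
noncomputable def boundaryMeasure {Ω : Type*} [PseudoMetricSpace Ω]
    [MeasurableSpace Ω] (μ : Measure Ω) (A : Set Ω) : ℝ :=
  liminf (fun ε : ℝ =>
    ((μ (Metric.thickening ε A)).toReal - (μ A).toReal) / ε)
    (nhdsWithin 0 (Set.Ioi 0))

/-!
Put `u(t) := -log (1 - μ(A_t))`, so that `1 - μ(A_t) = exp (-u(t))`. Since `(A_t)_ε ⊆ A_{t+ε}`,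
the lower right Dini derivative of `t ↦ μ(A_t)` is at least the boundary measure of `A_t`, hence,
by the isoperimetric hypothesis at `v = 1 - μ(A_t) ≤ 1/2`, at least `(1 - μ(A_t)) γ(u(t))`. So `u`
grows at rate at least `γ(u)` and `α⁻¹ ∘ u` at rate at least `1`, whence `α⁻¹(u(r)) ≥ r`. As
`t ↦ μ(A_t)` may jump, the rate bound is integrated by a supremum argument for monotone functions
instead of the mean value theorem.
-/

open Metric Topology Real

/-- The lower right Dini derivative `liminf_{ε→0+} (g (s + ε) - g s) / ε` is at least `L`. -/
def RightDiniGe (g : ℝ → ℝ) (s L : ℝ) : Prop :=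
  ∀ c < L, ∀ᶠ ε in 𝓝[>] 0, c * ε ≤ g (s + ε) - g s

theorem RightDiniGe.mono {g : ℝ → ℝ} {s L L' : ℝ} (hg : RightDiniGe g s L) (hL : L' ≤ L) :
    RightDiniGe g s L' :=
  fun c hc => hg c (hc.trans_le hL)

theorem MonotoneOn.mul_sub_le_sub_of_rightDiniGe {g : ℝ → ℝ} {a b L : ℝ} (hab : a ≤ b)
    (hg : MonotoneOn g (Icc a b)) (hdini : ∀ s ∈ Ico a b, RightDiniGe g s L) :
    L * (b - a) ≤ g b - g a := by
  have key : ∀ c < L, c * (b - a) ≤ g b - g a := by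
    intro c hc
    set S := {x ∈ Icc a b | c * (x - a) ≤ g x - g a}
    have haS : a ∈ S := ⟨left_mem_Icc.2 hab, by simp⟩
    have hSbdd : BddAbove S := ⟨b, fun x hx => hx.1.2⟩
    set m := sSup S
    have hm : m ∈ Icc a b := ⟨le_csSup hSbdd haS, csSup_le ⟨a, haS⟩ fun x hx => hx.1.2⟩
    -- `S` need not be closed, but monotonicity puts its supremum in it
    have hmS : c * (m - a) ≤ g m - g a := by
      have hsub : S ⊆ {x | c * (x - a) ≤ g m - g a} := fun x hx =>
        hx.2.trans (sub_le_sub_right (hg hx.1 hm (le_csSup hSbdd hx)) _)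
      exact closure_minimal hsub (isClosed_le (by fun_prop) continuous_const)
        (csSup_mem_closure ⟨a, haS⟩ hSbdd)
    rcases hm.2.eq_or_lt with hmb | hmb
    · rwa [← hmb]
    obtain ⟨ε, ⟨hε, hεb⟩, hslope⟩ :=
      ((eventually_mem_set.2 (Ioo_mem_nhdsGT (sub_pos.2 hmb))).and
        (hdini m ⟨hm.1, hmb⟩ c hc)).exists
    have hmεS : m + ε ∈ S :=
      ⟨⟨by linarith [hm.1], by linarith⟩, by linarith [mul_add c (m - a) ε]⟩
    linarith [le_csSup hSbdd hmεS]
  have hlim : Tendsto (fun c => c * (b - a)) (𝓝[<] L) (𝓝 (L * (b - a))) :=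
    ((continuous_id.mul continuous_const).tendsto L).mono_left nhdsWithin_le_nhds
  exact le_of_tendsto hlim (eventually_nhdsWithin_of_forall key)

theorem HasDerivAt.exists_mul_min_le_sub {Ψ : ℝ → ℝ} {U : Set ℝ} {d d' v : ℝ}
    (hΨ : HasDerivAt Ψ d v) (hd' : d' < d) (hU : U.OrdConnected) (hmono : MonotoneOn Ψ U)
    (hv : v ∈ U) : ∃ δ > 0, ∀ w ∈ U, v ≤ w → d' * min (w - v) δ ≤ Ψ w - Ψ v := by
  have hslope : ∀ᶠ w in 𝓝[>] v, d' < slope Ψ v w :=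
    ((hasDerivWithinAt_iff_tendsto_slope' (lt_irrefl v)).1 hΨ.hasDerivWithinAt).eventually
      (lt_mem_nhds hd')
  obtain ⟨u, hvu : v < u, hu⟩ := mem_nhdsGT_iff_exists_Ioo_subset.1 hslope
  refine ⟨(u - v) / 2, by linarith, ?_⟩
  have hnear : ∀ w, v ≤ w → w - v ≤ (u - v) / 2 → d' * (w - v) ≤ Ψ w - Ψ v := by
    intro w hvw hw
    rcases hvw.eq_or_lt with rfl | hvw
    · simp
    have := hu ⟨hvw, by linarith⟩
    rw [mem_ofPred_eq, slope_def_field, lt_div_iff₀ (sub_pos.2 hvw)] at this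
    exact this.le
  intro w hwU hvw
  rcases le_total (w - v) ((u - v) / 2) with hw | hw
  · rw [min_eq_left hw]
    exact hnear w hvw hw
  · rw [min_eq_right hw]
    have hmid : v + (u - v) / 2 ∈ U := hU.out hv hwU ⟨by linarith, by linarith⟩
    have := hnear (v + (u - v) / 2) (by linarith) (by linarith)
    rw [add_sub_cancel_left] at this
    linarith [hmono hmid hwU (by linarith)]

/-- Where `g` jumps, the derivative of `Ψ` says nothing; monotonicity of `Ψ` on `U` takes over. -/
theorem RightDiniGe.comp_hasDerivAt {g Ψ : ℝ → ℝ} {U : Set ℝ} {s L d : ℝ}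
    (hg : RightDiniGe g s L) (hL : 0 < L) (hΨ : HasDerivAt Ψ d (g s)) (hd : 0 < d)
    (hU : U.OrdConnected) (hmono : MonotoneOn Ψ U) (hgs : g s ∈ U)
    (hgU : ∀ᶠ ε in 𝓝[>] 0, g (s + ε) ∈ U) : RightDiniGe (Ψ ∘ g) s (d * L) := by
  intro c hc
  obtain ⟨d', hd'm, hd'⟩ := exists_between (max_lt ((div_lt_iff₀ hL).2 hc) hd)
  have hd'pos : 0 < d' := (le_max_right _ _).trans_lt hd'm
  have hcd' : c < d' * L := (div_lt_iff₀ hL).1 ((le_max_left _ _).trans_lt hd'm)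
  obtain ⟨L', hL'm, hL'⟩ := exists_between (max_lt ((div_lt_iff₀' hd'pos).2 hcd') hL)
  have hL'pos : 0 < L' := (le_max_right _ _).trans_lt hL'm
  have hcL' : c < d' * L' := (div_lt_iff₀' hd'pos).1 ((le_max_left _ _).trans_lt hL'm)
  obtain ⟨δ, hδ, hΨδ⟩ := hΨ.exists_mul_min_le_sub hd' hU hmono hgs
  filter_upwards [hg L' hL', hgU, Ioo_mem_nhdsGT (div_pos hδ hL'pos)] with ε hgε hεU hε
  have hε0 : 0 < ε := hε.1
  have hmin : L' * ε ≤ min (g (s + ε) - g s) δ :=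
    le_min hgε (by linarith [(lt_div_iff₀ hL'pos).1 hε.2])
  calc c * ε ≤ d' * (L' * ε) := by
        rw [← mul_assoc]; exact mul_le_mul_of_nonneg_right hcL'.le hε0.le
    _ ≤ d' * min (g (s + ε) - g s) δ := mul_le_mul_of_nonneg_left hmin hd'pos.le
    _ ≤ (Ψ ∘ g) (s + ε) - (Ψ ∘ g) s :=
      hΨδ _ hεU (by linarith [mul_pos hL'pos hε0])

theorem rightDiniGe_measure_thickening {Ω : Type*} [PseudoMetricSpace Ω] [MeasurableSpace Ω]
    (μ : Measure Ω) [IsFiniteMeasure μ] (A : Set Ω) (s : ℝ) :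
    RightDiniGe (fun t => (μ (thickening t A)).toReal) s
      (boundaryMeasure μ (thickening s A)) := by
  intro c hc
  have hbdd : (𝓝[>] (0 : ℝ)).IsBoundedUnder (· ≥ ·) fun ε =>
      ((μ (thickening ε (thickening s A))).toReal - (μ (thickening s A)).toReal) / ε := by
    refine isBoundedUnder_of_eventually_ge (a := 0) ?_
    filter_upwards [self_mem_nhdsWithin] with ε (hε : 0 < ε)
    exact div_nonneg (sub_nonneg.2 <| ENNReal.toReal_mono (measure_ne_top μ _)
      (measure_mono (self_subset_thickening hε _))) hε.le
  filter_upwards [eventually_lt_of_lt_liminf hc hbdd, self_mem_nhdsWithin] with ε hcε (hε : 0 < ε)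
  have hsub : thickening ε (thickening s A) ⊆ thickening (s + ε) A := by
    rw [add_comm]; exact thickening_thickening_subset ε s A
  rw [lt_div_iff₀ hε] at hcε
  linarith [ENNReal.toReal_mono (measure_ne_top μ _) (measure_mono hsub)]

/-- The paper's `α⁻¹`, with `γ` frozen at its value at `log 2` to the left of `log 2` so that
it is differentiable everywhere. -/
noncomputable def invAlpha (γ : ℝ → ℝ) (z : ℝ) : ℝ :=
  ∫ y in log 2..z, 1 / γ (max y (log 2))

theorem hasDerivAt_invAlpha {γ : ℝ → ℝ} (hγpos : ∀ x ∈ Ici (log 2), 0 < γ x)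
    (hγcont : ContinuousOn γ (Ici (log 2))) (z : ℝ) :
    HasDerivAt (invAlpha γ) (1 / γ (max z (log 2))) z := by
  have hcont : Continuous fun y => 1 / γ (max y (log 2)) :=
    continuous_const.div (hγcont.comp_continuous (by fun_prop) fun y => le_max_right y _)
      fun y => (hγpos _ (le_max_right y _)).ne'
  exact (hcont.integral_hasStrictDerivAt _ _).hasDerivAt

theorem strictMono_invAlpha {γ : ℝ → ℝ} (hγpos : ∀ x ∈ Ici (log 2), 0 < γ x)
    (hγcont : ContinuousOn γ (Ici (log 2))) : StrictMono (invAlpha γ) :=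
  strictMono_of_hasDerivAt_pos (hasDerivAt_invAlpha hγpos hγcont)
    fun z => one_div_pos.2 (hγpos _ (le_max_right z _))

theorem invAlpha_log_two (γ : ℝ → ℝ) : invAlpha γ (log 2) = 0 :=
  intervalIntegral.integral_same

theorem invAlpha_eq_integral (γ : ℝ → ℝ) {x : ℝ} (hx : log 2 ≤ x) :
    invAlpha γ x = ∫ y in log 2..x, 1 / γ y := by
  refine intervalIntegral.integral_congr fun y hy => ?_
  rw [uIcc_of_le hx] at hy
  simp only [max_eq_left hy.1]

theorem hasDerivAt_neg_log_one_sub {v : ℝ} (hv : v < 1) :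
    HasDerivAt (fun w => -log (1 - w)) (1 / (1 - v)) v :=
  (((hasDerivAt_id' v).const_sub 1).log (sub_pos.2 hv).ne').fun_neg.congr_deriv (by ring)

theorem monotoneOn_neg_log_one_sub : MonotoneOn (fun w : ℝ => -log (1 - w)) (Iio 1) :=
  fun _ _ _ hw hvw => neg_le_neg (log_le_log (sub_pos.2 hw) (sub_le_sub_left hvw 1))

theorem log_two_le_neg_log_one_sub {v : ℝ} (h1 : 1 / 2 ≤ v) (h2 : v < 1) :
    log 2 ≤ -log (1 - v) := by
  rw [← log_inv, ← one_div]
  exact log_le_log two_pos (by rw [le_div_iff₀ (sub_pos.2 h2)]; linarith)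

/-- `Ĩ(v) ≥ v γ(log 1/v)` on `(0, 1/2]`, for the isoperimetric profile `I` of `μ`. -/
def IsoperimetricBound {Ω : Type*} [PseudoMetricSpace Ω] [MeasurableSpace Ω] (μ : Measure Ω)
    (γ : ℝ → ℝ) : Prop :=
  ∀ A : Set Ω, MeasurableSet A → ∀ v ∈ Ioc (0 : ℝ) (1 / 2),
    ((μ A).toReal = v ∨ (μ A).toReal = 1 - v) → v * γ (log (1 / v)) ≤ boundaryMeasure μ A

noncomputable def tailExponent {Ω : Type*} [PseudoMetricSpace Ω] [MeasurableSpace Ω]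
    (μ : Measure Ω) (A : Set Ω) (t : ℝ) : ℝ :=
  -log (1 - (μ (thickening t A)).toReal)

section Concentration

variable {Ω : Type*} [PseudoMetricSpace Ω] [MeasurableSpace Ω] {μ : Measure Ω}
  [IsFiniteMeasure μ] {γ : ℝ → ℝ} {A : Set Ω} {r s : ℝ}

theorem monotone_measure_thickening : Monotone fun t => (μ (thickening t A)).toReal :=
  fun _ _ hst => ENNReal.toReal_mono (measure_ne_top μ _) (measure_mono (thickening_mono hst A))

theorem monotoneOn_tailExponent (hr : (μ (thickening r A)).toReal < 1) :
    MonotoneOn (tailExponent μ A) (Iic r) := fun _ hs _ ht hst =>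
  monotoneOn_neg_log_one_sub (monotone_measure_thickening hs |>.trans_lt hr)
    (monotone_measure_thickening ht |>.trans_lt hr) (monotone_measure_thickening hst)

theorem half_le_measure_thickening (hA : 1 / 2 ≤ (μ A).toReal) (hs : 0 < s) :
    1 / 2 ≤ (μ (thickening s A)).toReal :=
  hA.trans (ENNReal.toReal_mono (measure_ne_top μ _) (measure_mono (self_subset_thickening hs A)))

theorem log_two_le_tailExponent (hA : 1 / 2 ≤ (μ A).toReal)
    (hr : (μ (thickening r A)).toReal < 1) (hs : s ∈ Ioc 0 r) : log 2 ≤ tailExponent μ A s :=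
  log_two_le_neg_log_one_sub (half_le_measure_thickening hA hs.1)
    ((monotone_measure_thickening hs.2).trans_lt hr)

theorem rightDiniGe_tailExponent [OpensMeasurableSpace Ω] (hγpos : ∀ x ∈ Ici (log 2), 0 < γ x)
    (hiso : IsoperimetricBound μ γ) (hA : 1 / 2 ≤ (μ A).toReal)
    (hr : (μ (thickening r A)).toReal < 1) (hs : s ∈ Ioo 0 r) :
    RightDiniGe (tailExponent μ A) s (γ (tailExponent μ A s)) := by
  have hu := log_two_le_tailExponent hA hr ⟨hs.1, hs.2.le⟩
  have hs1 : (μ (thickening s A)).toReal < 1 := (monotone_measure_thickening hs.2.le).trans_lt hr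
  have hbdry : (1 - (μ (thickening s A)).toReal) * γ (tailExponent μ A s) ≤
      boundaryMeasure μ (thickening s A) := by
    have := hiso _ isOpen_thickening.measurableSet _
      ⟨sub_pos.2 hs1, by linarith [half_le_measure_thickening hA hs.1]⟩
      (Or.inr (sub_sub_cancel _ _).symm)
    rwa [one_div, log_inv] at this
  have hL : 0 < (1 - (μ (thickening s A)).toReal) * γ (tailExponent μ A s) :=
    mul_pos (sub_pos.2 hs1) (hγpos _ hu)
  have hU : ∀ᶠ ε in 𝓝[>] 0, (μ (thickening (s + ε) A)).toReal ∈ Iio 1 := by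
    filter_upwards [Ioo_mem_nhdsGT (sub_pos.2 hs.2)] with ε hε
    exact (monotone_measure_thickening (by linarith [hε.2])).trans_lt hr
  refine (((rightDiniGe_measure_thickening μ A s).mono hbdry).comp_hasDerivAt hL
    (hasDerivAt_neg_log_one_sub hs1) (one_div_pos.2 (sub_pos.2 hs1)) ordConnected_Iio
    monotoneOn_neg_log_one_sub hs1 hU).mono (le_of_eq ?_)
  rw [← mul_assoc, one_div_mul_cancel (sub_pos.2 hs1).ne', one_mul]

theorem rightDiniGe_invAlpha_comp_tailExponent [OpensMeasurableSpace Ω]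
    (hγpos : ∀ x ∈ Ici (log 2), 0 < γ x) (hγcont : ContinuousOn γ (Ici (log 2)))
    (hiso : IsoperimetricBound μ γ) (hA : 1 / 2 ≤ (μ A).toReal)
    (hr : (μ (thickening r A)).toReal < 1) (hs : s ∈ Ioo 0 r) :
    RightDiniGe (invAlpha γ ∘ tailExponent μ A) s 1 := by
  have hu := log_two_le_tailExponent hA hr ⟨hs.1, hs.2.le⟩
  have := (rightDiniGe_tailExponent hγpos hiso hA hr hs).comp_hasDerivAt (hγpos _ hu)
    (hasDerivAt_invAlpha hγpos hγcont _)
    (one_div_pos.2 (hγpos _ (le_max_right (tailExponent μ A s) _)))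
    ordConnected_univ ((strictMono_invAlpha hγpos hγcont).monotone.monotoneOn _) (mem_univ _)
    (Eventually.of_forall fun _ => mem_univ _)
  rwa [max_eq_left hu, one_div_mul_cancel (hγpos _ hu).ne'] at this

theorem le_invAlpha_tailExponent [OpensMeasurableSpace Ω]
    (hγpos : ∀ x ∈ Ici (log 2), 0 < γ x) (hγcont : ContinuousOn γ (Ici (log 2)))
    (hiso : IsoperimetricBound μ γ) (hA : 1 / 2 ≤ (μ A).toReal) (hr0 : 0 < r)
    (hr : (μ (thickening r A)).toReal < 1) : r ≤ invAlpha γ (tailExponent μ A r) := by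
  have hgap : ∀ a ∈ Ioo 0 r, r - a ≤ invAlpha γ (tailExponent μ A r) := by
    intro a ha
    have hmono : MonotoneOn (invAlpha γ ∘ tailExponent μ A) (Icc a r) :=
      (strictMono_invAlpha hγpos hγcont).monotone.comp_monotoneOn
        ((monotoneOn_tailExponent hr).mono Icc_subset_Iic_self)
    have hgrowth := hmono.mul_sub_le_sub_of_rightDiniGe ha.2.le fun s hs =>
      rightDiniGe_invAlpha_comp_tailExponent hγpos hγcont hiso hA hr ⟨ha.1.trans_le hs.1, hs.2⟩
    have hstart : 0 ≤ invAlpha γ (tailExponent μ A a) :=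
      invAlpha_log_two γ ▸ (strictMono_invAlpha hγpos hγcont).monotone
        (log_two_le_tailExponent hA hr ⟨ha.1, ha.2.le⟩)
    simp only [Function.comp_apply, one_mul] at hgrowth
    linarith
  have hlim : Tendsto (fun a => r - a) (𝓝[>] 0) (𝓝 r) := by
    simpa using (tendsto_const_nhds.sub tendsto_id).mono_left
      (nhdsWithin_le_nhds (a := (0 : ℝ)))
  exact le_of_tendsto hlim ((eventually_mem_set.2 (Ioo_mem_nhdsGT hr0)).mono hgap)

end Concentration

/-- Isoperimetry implies concentration: if `Ĩ(v) ≥ v γ(log 1/v)` on `(0,1/2]`,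
then `K(r) ≥ α(r)` where `α⁻¹(x) = ∫_{log 2}^x dy/γ(y)`; i.e. for every Borel
`A` with `μ(A) ≥ 1/2`, every `r > 0` and every `x ≥ log 2` with
`α⁻¹(x) ≤ r`, one has `1 - μ(A_r) ≤ exp(-x)`. -/
theorem stmt_14 {Ω : Type*} [MetricSpace Ω] [MeasurableSpace Ω] [BorelSpace Ω]
    (μ : Measure Ω) [IsProbabilityMeasure μ]
    (γ : ℝ → ℝ) (hγpos : ∀ x ∈ Set.Ici (Real.log 2), 0 < γ x)
    (hγcont : ContinuousOn γ (Set.Ici (Real.log 2)))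
    (hiso : ∀ A : Set Ω, MeasurableSet A →
      ∀ v ∈ Set.Ioc (0 : ℝ) (1 / 2),
        ((μ A).toReal = v ∨ (μ A).toReal = 1 - v) →
        v * γ (Real.log (1 / v)) ≤ boundaryMeasure μ A) :
    ∀ A : Set Ω, MeasurableSet A → 1 / 2 ≤ (μ A).toReal →
      ∀ r > (0 : ℝ), ∀ x ∈ Set.Ici (Real.log 2),
        (∫ y in (Real.log 2)..x, 1 / γ y) ≤ r →
        1 - (μ (Metric.thickening r A)).toReal ≤ Real.exp (-x) := by
  intro A _ hA r hr x hx hxr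
  rcases le_or_gt 1 (μ (thickening r A)).toReal with hr1 | hr1
  · exact (sub_nonpos.2 hr1).trans (exp_pos _).le
  have hx_le : x ≤ tailExponent μ A r :=
    (strictMono_invAlpha hγpos hγcont).le_iff_le.1 <| (invAlpha_eq_integral γ hx).trans_le <|
      hxr.trans (le_invAlpha_tailExponent hγpos hγcont hiso hA hr hr1)
  calc 1 - (μ (thickening r A)).toReal = exp (-tailExponent μ A r) := by
        rw [tailExponent, neg_neg, exp_log (sub_pos.2 hr1)]
    _ ≤ exp (-x) := exp_le_exp.2 (neg_le_neg hx_le)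
end

section
/- Let (Ω, d) be a metric space, x₀ ∈ Ω, and μ a Borel probability measure such that μ{x : d(x, x₀) ≥ r} ≤ exp(−β(r)) for all r ≥ 0, where β : ℝ≥0 → ℝ≥0 ∪ {+∞} is non-decreasing. Set R := β⁻¹(log 2) (generalized inverse) and assume closed balls are compact. Then the log-concentration profile satisfies K(r + R) ≥ β(r) for all r ≥ 0; that is, for every Borel set A with μ(A) ≥ 1/2 and every r > 0, 1 − μ(A_{r+R}) ≤ exp(−β(r)). -/
open MeasureTheory

/-- Generalized inverse of a non-decreasing function:
`β⁻¹(s) = sup {r ≥ 0 : β r ≤ s}`. -/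
noncomputable def ginv (β : ℝ → ℝ) (s : ℝ) : ℝ :=
  sSup {r : ℝ | 0 ≤ r ∧ β r ≤ s}

/-- A tail estimate `μ{d(·,x₀) ≥ r} ≤ exp(-β(r))` implies the concentration
inequality `K(r + R) ≥ β(r)` with `R = β⁻¹(log 2)`. -/
theorem stmt_16 {Ω : Type*} [MetricSpace Ω] [ProperSpace Ω]
    [MeasurableSpace Ω] [BorelSpace Ω]
    (μ : Measure Ω) [IsProbabilityMeasure μ] (x₀ : Ω)
    (β : ℝ → ℝ) (hβ0 : ∀ r, 0 ≤ r → 0 ≤ β r)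
    (hβmono : MonotoneOn β (Set.Ici 0))
    (htail : ∀ r ≥ (0 : ℝ),
      (μ {x : Ω | r ≤ dist x x₀}).toReal ≤ Real.exp (-β r)) :
    ∀ A : Set Ω, MeasurableSet A → 1 / 2 ≤ (μ A).toReal →
      ∀ r > (0 : ℝ),
        1 - (μ (Metric.thickening (r + ginv β (Real.log 2)) A)).toReal ≤
          Real.exp (-β r) := by
  intro A hA hA2 r hr
  set R := ginv β (Real.log 2) with hR
  set S : Set ℝ := {r : ℝ | 0 ≤ r ∧ β r ≤ Real.log 2} with hS
  have hRS : R = sSup S := by rw [hR, ginv, hS]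
  -- β 0 ≤ 0
  have hβ00 : β 0 ≤ 0 := by
    have h := htail 0 le_rfl
    have huniv : {x : Ω | (0:ℝ) ≤ dist x x₀} = Set.univ := by
      ext x; simp [dist_nonneg]
    rw [huniv, measure_univ] at h
    simp at h
    nlinarith [Real.add_one_le_exp (-β 0)]
  have h0S : (0:ℝ) ∈ S := ⟨le_rfl, hβ00.trans (Real.log_nonneg (by norm_num))⟩
  -- general fact about toReal of compl
  have hcompl : ∀ T : Set Ω, MeasurableSet T → (μ Tᶜ).toReal = 1 - (μ T).toReal := by
    intro T hT
    have h := measure_compl hT (measure_ne_top μ T)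
    rw [measure_univ] at h
    rw [h, ENNReal.toReal_sub_of_le prob_le_one (by simp)]
    simp
  by_cases hb : ∃ r' : ℝ, 0 ≤ r' ∧ Real.log 2 < β r'
  · obtain ⟨r', hr'0, hr'⟩ := hb
    have hbdd : BddAbove S := by
      refine ⟨r', fun s hs => ?_⟩
      by_contra hcon
      push_neg at hcon
      exact absurd (hβmono hr'0 hs.1 hcon.le) (not_le.mpr (lt_of_le_of_lt hs.2 hr'))
    have hR0 : 0 ≤ R := hRS ▸ le_csSup hbdd h0S
    -- for every ε > 0, A meets the ball of radius R + ε
    have hkey : ∀ ε : ℝ, 0 < ε → ∃ y ∈ A, dist y x₀ < R + ε := by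
      intro ε hε
      have hnot : R + ε ∉ S := fun h => absurd (le_csSup hbdd h) (by rw [← hRS]; linarith)
      have hβRε : Real.log 2 < β (R + ε) := by
        by_contra hcon
        exact hnot ⟨by linarith, not_lt.mp hcon⟩
      have htail' := htail (R + ε) (by linarith)
      have hlt : (μ {x : Ω | R + ε ≤ dist x x₀}).toReal < 1 / 2 := by
        calc (μ {x : Ω | R + ε ≤ dist x x₀}).toReal ≤ Real.exp (-β (R+ε)) := htail'
          _ < Real.exp (-Real.log 2) := by apply Real.exp_lt_exp.mpr; linarith
          _ = 1 / 2 := by rw [Real.exp_neg, Real.exp_log (by norm_num)]; norm_num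
      by_contra hcon
      push_neg at hcon
      have hsub : A ⊆ {x : Ω | R + ε ≤ dist x x₀} := by
        intro y hy
        exact hcon y hy
      have := ENNReal.toReal_mono (measure_ne_top μ _) (measure_mono hsub)
      linarith
    -- complement of thickening is in the tail set
    have hsub : (Metric.thickening (r + R) A)ᶜ ⊆ {x : Ω | r ≤ dist x x₀} := by
      intro x hx
      by_contra hcon
      simp only [Set.mem_setOf_eq, not_le] at hcon
      obtain ⟨y, hyA, hy⟩ := hkey (r - dist x x₀) (by linarith)
      apply hx
      rw [Metric.mem_thickening_iff]
      refine ⟨y, hyA, ?_⟩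
      calc dist x y ≤ dist x x₀ + dist y x₀ := by
            rw [dist_comm y x₀]; exact dist_triangle x x₀ y
        _ < dist x x₀ + (R + (r - dist x x₀)) := by linarith
        _ = r + R := by ring
    have hT : MeasurableSet (Metric.thickening (r + R) A) :=
      Metric.isOpen_thickening.measurableSet
    have h1 := hcompl _ hT
    have h2 := ENNReal.toReal_mono (measure_ne_top μ _) (measure_mono hsub)
    have h3 := htail r hr.le
    linarith
  · -- β ≤ log 2 on [0, ∞); S unbounded, R = 0
    push_neg at hb
    have hSeq : S = Set.Ici 0 := by
      ext s; simp only [hS, Set.mem_setOf_eq, Set.mem_Ici]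
      exact ⟨fun h => h.1, fun h => ⟨h, hb s h⟩⟩
    have hR0 : R = 0 := by
      rw [hR, ginv, ← hS, hSeq]
      exact Real.sSup_of_not_bddAbove (by simpa using not_bddAbove_Ici (a := (0:ℝ)))
    have hsub : A ⊆ Metric.thickening (r + R) A :=
      Metric.self_subset_thickening (by linarith) A
    have h2 := ENNReal.toReal_mono (measure_ne_top μ _) (measure_mono hsub)
    have hβr : β r ≤ Real.log 2 := hb r hr.le
    have hle : Real.exp (-Real.log 2) ≤ Real.exp (-β r) := Real.exp_le_exp.mpr (by linarith)
    rw [Real.exp_neg, Real.exp_log (by norm_num)] at hle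
    linarith
end
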